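/- For every real number s ≥ 0 and every α ∈ (1, 2], one has e^{-s} ≤ 1 - s + s^α. -/
import Mathlib


theorem exp_neg_le_one_sub_add_rpow (s α : ℝ) (hs : 0 ≤ s) (hα1 : 1 < α) (hα2 : α ≤ 2) :
    Real.exp (-s) ≤ 1 - s + s ^ α := by
  rcases eq_or_lt_of_le hs with h0 | h0
  · simp [← h0, Real.rpow_eq_zero_iff_of_nonneg, (by linarith : α ≠ 0)]
  rcases le_or_gt s 1 with h1 | h1
  · -- 0 < s ≤ 1 : e^{-s} ≤ 1/(1+s) ≤ 1 - s + s^2 ≤ 1 - s + s^α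
    have hsq : s ^ (2:ℝ) ≤ s ^ α := Real.rpow_le_rpow_of_exponent_ge h0 h1 hα2
    have h2 : s ^ (2:ℝ) = s ^ (2:ℕ) := by
      rw [← Real.rpow_natCast s 2]; norm_num
    have hexp : 1 + s ≤ Real.exp s := by
      have := Real.add_one_le_exp s; linarith
    have hpos : (0:ℝ) < 1 + s := by linarith
    have key : Real.exp (-s) ≤ 1 / (1 + s) := by
      rw [Real.exp_neg, inv_eq_one_div]
      apply one_div_le_one_div_of_le hpos hexp
    have key2 : 1 / (1 + s) ≤ 1 - s + s ^ 2 := by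
      rw [div_le_iff₀ hpos]
      nlinarith [pow_nonneg hs 3]
    calc Real.exp (-s) ≤ 1 / (1 + s) := key
      _ ≤ 1 - s + s ^ 2 := key2
      _ ≤ 1 - s + s ^ α := by rw [← h2]; linarith
  · -- s > 1 : e^{-s} ≤ 1 ≤ 1 - s + s^α since s^α ≥ s
    have hsa : s ^ (1:ℝ) ≤ s ^ α := Real.rpow_le_rpow_left_iff h1 |>.mpr hα1.le
    rw [Real.rpow_one] at hsa
    have : Real.exp (-s) ≤ 1 := Real.exp_le_one_iff.mpr (by linarith)
    linarith
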